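/- arXiv:1903.08379 — 2 statements merged into one kernel-verified Lean document; each statement's English description precedes it below -/
import Mathlib

section
/- For all n ≥ 1 and m ≥ 1, the higher order Bell numbers satisfy B_n^(m) = Σ_{s=0}^{n−1} C(n−1, s) · B_s^(m) · B_{n−s}^(m−1), where B_0^(m) = 1 and C(n−1,s) is a binomial coefficient. -/
/-- `m`-th order ("hyper") partitions of a finite set `s`:
a chain `(P₁, …, P_m)` where `P₁` is a partition of `s` and each `P_{j+1}`
is a partition of the set of blocks of `P_j`. For `m = 0` it is `s` itself
(a single trivial object). -/
def HyperPartition : (m : ℕ) → {α : Type} → [DecidableEq α] → Finset α → Type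
  | 0, _, _, _ => PUnit
  | m + 1, _, _, s => (P : Finpartition s) × HyperPartition m P.parts

/-- The number of blocks of the outermost partition of a hyper partition
(for `m = 0`, by convention, the cardinality of the underlying set). -/
def HyperPartition.outerBlocks :
    (m : ℕ) → {α : Type} → [DecidableEq α] → {s : Finset α} →
      HyperPartition m s → ℕ
  | 0, _, _, s, _ => s.card
  | 1, _, _, _, p => p.1.parts.card
  | m + 2, _, _, _, p => HyperPartition.outerBlocks (m + 1) p.2

/-- `|℘ₙ^(m)|`: the number of `m`-th order partitions of an `n`-element set. -/
noncomputable def hyperBell (m n : ℕ) : ℕ :=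
  Nat.card (HyperPartition m (Finset.univ : Finset (Fin n)))

/-- The `m`-th order Stirling number `S^(m)(n,k)`: the number of `m`-th order
partitions of an `n`-element set whose outermost partition has exactly `k` blocks. -/
noncomputable def hyperStirling (m n k : ℕ) : ℕ :=
  Nat.card {p : HyperPartition m (Finset.univ : Finset (Fin n)) //
    HyperPartition.outerBlocks m p = k}

/-- The ordinary Stirling number of the second kind `S(n,k)`: the number of
set partitions of an `n`-element set into exactly `k` blocks. -/
noncomputable def stirling (n k : ℕ) : ℕ :=
  Nat.card {P : Finpartition (Finset.univ : Finset (Fin n)) // P.parts.card = k}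

/-- Composition `f(g(x))` of formal power series (intended for `g` with zero
constant term, in which case `coeff n (g ^ i) = 0` for `i > n`). -/
noncomputable def psComp (f g : PowerSeries ℚ) : PowerSeries ℚ :=
  PowerSeries.mk fun n =>
    PowerSeries.coeff (R := ℚ) n
      (∑ i ∈ Finset.range (n + 1), PowerSeries.C (R := ℚ) (PowerSeries.coeff (R := ℚ) i f) * g ^ i)

/-- The iterated exponential series: `E₀ = exp x`, `E_{m+1} = exp (E_m - 1)`. -/
noncomputable def E : ℕ → PowerSeries ℚ
  | 0 => PowerSeries.exp ℚ
  | m + 1 => psComp (PowerSeries.exp ℚ) (E m - 1)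

/-- The `m`-th order Bell number `Bₙ^(m) = n! · [xⁿ] E_m(x)`. -/
noncomputable def bell (m n : ℕ) : ℚ :=
  (n.factorial : ℚ) * PowerSeries.coeff (R := ℚ) n (E m)

/-! Since `E (m + 1) = exp ∘ (E m - 1)`, the chain rule gives `E (m + 1)' = E (m + 1) * E m'`.
Reading off the coefficient of `xⁿ` of this differential equation and multiplying by `n!` turns
the product of series into a binomial convolution of their exponential coefficients, which is
the recurrence. -/

open PowerSeries Finset Nat

theorem psComp_eq_subst {f g : ℚ⟦X⟧} (hg : constantCoeff g = 0) :
    psComp f g = f.subst g := by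
  ext n
  have hvanish : ∀ i, n < i → coeff n (g ^ i) = 0 := fun i hi =>
    coeff_of_lt_order n <|
      (Nat.cast_lt.mpr hi).trans_le (le_order_pow_of_constantCoeff_eq_zero i hg)
  rw [coeff_subst' (HasSubst.of_constantCoeff_zero' hg),
    finsum_eq_sum_of_support_subset (s := range (n + 1)) _ fun i hi => ?_]
  · simp [psComp, coeff_C_mul, smul_eq_mul]
  · by_contra hi'
    simp only [coe_range, Set.mem_Iio, not_lt] at hi'
    exact hi (by simp [hvanish i (by omega)])

theorem constantCoeff_E (m : ℕ) : constantCoeff (E m) = 1 := by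
  induction m with
  | zero => exact constantCoeff_exp
  | succ m ih =>
    rw [E, ← coeff_zero_eq_constantCoeff_apply]
    simp [psComp, ih]

theorem E_succ_eq_subst (m : ℕ) : E (m + 1) = (exp ℚ).subst (E m - 1) :=
  psComp_eq_subst (by simp [constantCoeff_E])

theorem derivative_E_succ (m : ℕ) : d⁄dX ℚ (E (m + 1)) = E (m + 1) * d⁄dX ℚ (E m) := by
  rw [E_succ_eq_subst,
    derivative_subst (HasSubst.of_constantCoeff_zero' (by simp [constantCoeff_E])), derivative_exp,
    map_sub, derivative_one, sub_zero]

theorem factorial_mul_coeff_succ_of_derivative_eq_mul {R : Type*} [CommSemiring R]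
    {F G : R⟦X⟧} (h : d⁄dX R F = F * d⁄dX R G) (n : ℕ) :
    ((n + 1)! : R) * coeff (n + 1) F =
      ∑ s ∈ range (n + 1), (n.choose s : R) * ((s ! : R) * coeff s F) *
        (((n + 1 - s)! : R) * coeff (n + 1 - s) G) := by
  have hcoeff := congrArg (fun P => (n ! : R) * coeff n P) h
  simp only [coeff_derivative, coeff_mul, Nat.sum_antidiagonal_eq_sum_range_succ_mk, mul_sum]
    at hcoeff
  calc ((n + 1)! : R) * coeff (n + 1) F = n ! * (coeff (n + 1) F * (n + 1)) := by
        push_cast [Nat.factorial_succ]; ring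
    _ = _ := hcoeff
    _ = _ := sum_congr rfl fun s hs => ?_
  have hsn : s ≤ n := Nat.lt_succ_iff.mp (mem_range.mp hs)
  have hfac : n.choose s * s ! * (n - s + 1)! = n ! * (n - s + 1) := by
    rw [Nat.factorial_succ, ← Nat.choose_mul_factorial_mul_factorial hsn]
    ring
  rw [Nat.sub_add_comm hsn, show (n.choose s : R) * (s ! * coeff s F) * ((n - s + 1)! *
      coeff (n - s + 1) G) = ((n.choose s * s ! * (n - s + 1)! : ℕ) : R) * coeff s F *
      coeff (n - s + 1) G by push_cast; ring, hfac]
  push_cast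
  ring

/-- `Bₙ^(m) = Σ_{s=0}^{n−1} C(n−1,s) · B_s^(m) · B_{n−s}^(m−1)`
(and `B₀^(m) = 1` holds by definition of `bell`). -/
theorem stmt4 (n m : ℕ) (hn : 1 ≤ n) (hm : 1 ≤ m) :
    bell m n =
      ∑ s ∈ Finset.range n, ((n - 1).choose s : ℚ) * bell m s * bell (m - 1) (n - s) := by
  obtain ⟨n, rfl⟩ := Nat.exists_eq_add_of_le' hn
  obtain ⟨m, rfl⟩ := Nat.exists_eq_add_of_le' hm
  simpa only [bell, Nat.add_sub_cancel] using
    factorial_mul_coeff_succ_of_derivative_eq_mul (derivative_E_succ m) n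
end

section
/- Fix N ≥ 1 and let 𝐒 be the N×N matrix whose (i,j) entry is the ordinary Stirling number of the second kind S(i,j) for 1 ≤ i, j ≤ N. Then for all m ≥ 1 and all 1 ≤ k ≤ n ≤ N, the (n,k) entry of the matrix power 𝐒^m equals the m-th order Stirling number S^(m)(n,k). -/
/-!
An `(m+1)`-th order partition of a finite set is a partition `P` together with an `m`-th order
partition of the set of blocks of `P`, and the number of `m`-th order partitions with `k` outer
blocks depends only on the cardinality of the underlying set (transport along a bijection).
Hence `S^(m+1)(n,k) = ∑ⱼ S(n,j) S^(m)(j,k)`, which is the entry of `𝐒 · 𝐒^m`: the terms outside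
`1 ≤ j ≤ N` vanish because `S(n,0) = 0` for `n ≥ 1` and `S(n,j) = 0` for `j > n`. The induction
starts at `m = 0`, where both sides are the identity matrix.
-/

open Finset

section Transport

variable {α β : Type*} [DecidableEq α] {s : Finset α} {t : Finset β}

def transportFinset (e : s ≃ t) (b : Finset α) : Finset β :=
  (b.subtype (· ∈ s)).map (e.toEmbedding.trans (.subtype _))

lemma transportFinset_subset (e : s ≃ t) (b : Finset α) : transportFinset e b ⊆ t := by
  intro y hy
  simp only [transportFinset, mem_map, mem_subtype] at hy
  obtain ⟨x, -, rfl⟩ := hy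
  exact (e x).2

lemma mem_transportFinset (e : s ≃ t) {b : Finset α} {y : β} (hy : y ∈ t) :
    y ∈ transportFinset e b ↔ ↑(e.symm ⟨y, hy⟩) ∈ b := by
  simp only [transportFinset, mem_map, mem_subtype, Function.Embedding.trans_apply,
    Equiv.coe_toEmbedding, Function.Embedding.subtype_apply]
  constructor
  · rintro ⟨x, hx, rfl⟩
    simpa using hx
  · intro h
    exact ⟨_, h, by simp⟩

lemma transportFinset_symm_transportFinset [DecidableEq β] (e : s ≃ t) {b : Finset α}
    (hb : b ⊆ s) :
    transportFinset e.symm (transportFinset e b) = b := by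
  ext a
  by_cases ha : a ∈ s
  · rw [mem_transportFinset e.symm ha, Equiv.symm_symm, mem_transportFinset e (e ⟨a, ha⟩).2]
    simp
  · exact iff_of_false (fun h => ha (transportFinset_subset e.symm _ h)) (fun h => ha (hb h))

namespace Finpartition

variable [DecidableEq β]

def transport (e : s ≃ t) (P : Finpartition s) : Finpartition t :=
  .ofExistsUnique (P.parts.image (transportFinset e))
    (by
      simp only [mem_image]
      rintro _ ⟨b, -, rfl⟩
      exact transportFinset_subset e b)
    (by
      intro y hy
      obtain ⟨b, ⟨hbP, hxb⟩, huniq⟩ := P.existsUnique_mem (e.symm ⟨y, hy⟩).2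
      refine ⟨transportFinset e b, ⟨mem_image_of_mem _ hbP, (mem_transportFinset e hy).2 hxb⟩, ?_⟩
      rintro _ ⟨hc, hyc⟩
      obtain ⟨c, hcP, rfl⟩ := mem_image.1 hc
      rw [huniq c ⟨hcP, (mem_transportFinset e hy).1 hyc⟩])
    (by
      simp only [mem_image, not_exists, not_and]
      intro b hb hempty
      obtain ⟨x, hx⟩ := P.nonempty_of_mem_parts hb
      have hmem : ↑(e ⟨x, P.le hb hx⟩) ∈ transportFinset e b :=
        (mem_transportFinset e (e _).2).2 (by simpa using hx)
      simp [hempty] at hmem)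

lemma parts_transport (e : s ≃ t) (P : Finpartition s) :
    (P.transport e).parts = P.parts.image (transportFinset e) := rfl

lemma card_parts_transport (e : s ≃ t) (P : Finpartition s) :
    #(P.transport e).parts = #P.parts :=
  card_image_of_injOn fun b hb c hc h => by
    simpa only [transportFinset_symm_transportFinset e (P.le hb),
      transportFinset_symm_transportFinset e (P.le hc)] using congrArg (transportFinset e.symm) h

lemma transport_symm_transport (e : s ≃ t) (P : Finpartition s) :
    (P.transport e).transport e.symm = P := by
  refine Finpartition.ext ?_
  rw [parts_transport, parts_transport, image_image]
  exact (image_congr fun b hb => transportFinset_symm_transportFinset e (P.le hb)).trans image_id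

def transportEquiv (e : s ≃ t) : Finpartition s ≃ Finpartition t where
  toFun := transport e
  invFun := transport e.symm
  left_inv := transport_symm_transport e
  right_inv Q := by simpa using transport_symm_transport e.symm Q

end Finpartition

end Transport

namespace HyperPartition

instance instFinite : (m : ℕ) → {α : Type} → [DecidableEq α] → (s : Finset α) →
    Finite (HyperPartition m s)
  | 0, _, _, _ => Finite.of_fintype PUnit
  | m + 1, _, _, s =>
    have := fun P : Finpartition s => instFinite m P.parts
    inferInstanceAs (Finite (Σ P : Finpartition s, HyperPartition m P.parts))

lemma outerBlocks_succ (m : ℕ) {α : Type} [DecidableEq α] {s : Finset α}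
    (p : HyperPartition (m + 1) s) : outerBlocks (m + 1) p = outerBlocks m p.2 := by
  cases m <;> rfl

lemma card_outerBlocks_succ (m : ℕ) {α : Type} [DecidableEq α] (s : Finset α) (k : ℕ) :
    Nat.card {p : HyperPartition (m + 1) s // outerBlocks (m + 1) p = k} =
      ∑ P : Finpartition s, Nat.card {q : HyperPartition m P.parts // outerBlocks m q = k} := by
  rw [← Nat.card_sigma]
  refine Nat.card_congr <| (Equiv.subtypeEquivRight fun p => by rw [outerBlocks_succ]).trans
    { toFun p := ⟨p.1.1, p.1.2, p.2⟩
      invFun q := ⟨⟨q.1, q.2.1⟩, q.2.2⟩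
      left_inv _ := rfl
      right_inv _ := rfl }

theorem card_outerBlocks_eq_hyperStirling (m : ℕ) {α : Type} [DecidableEq α] (s : Finset α)
    (k : ℕ) : Nat.card {p : HyperPartition m s // outerBlocks m p = k} = hyperStirling m #s k := by
  induction m generalizing α with
  | zero =>
    simp only [hyperStirling, outerBlocks, card_univ, Fintype.card_fin]
    rfl
  | succ m ih =>
    let e : s ≃ (univ : Finset (Fin #s)) := s.equivFin.trans (Equiv.subtypeUnivEquiv mem_univ).symm
    rw [hyperStirling, card_outerBlocks_succ, card_outerBlocks_succ]
    simp only [ih]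
    exact Fintype.sum_equiv (Finpartition.transportEquiv e) _ _
      fun P => by rw [← Finpartition.card_parts_transport e P]; rfl

end HyperPartition

lemma stirling_eq_card (n j : ℕ) :
    stirling n j = #{P : Finpartition (univ : Finset (Fin n)) | #P.parts = j} := by
  rw [stirling, Nat.card_eq_fintype_card, Fintype.card_subtype]

lemma stirling_eq_zero_of_lt {n k : ℕ} (h : n < k) : stirling n k = 0 := by
  rw [stirling_eq_card, card_eq_zero, filter_eq_empty_iff]
  intro P _ hP
  have := P.card_parts_le_card
  simp only [card_univ, Fintype.card_fin] at this
  omega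

lemma stirling_succ_zero (n : ℕ) : stirling (n + 1) 0 = 0 := by
  rw [stirling_eq_card, card_eq_zero, filter_eq_empty_iff]
  intro P _ hP
  rw [card_eq_zero, Finpartition.parts_eq_empty_iff] at hP
  exact univ_nonempty.ne_empty hP

lemma sum_finpartition_eq_sum_stirling {M : Type*} [AddCommMonoid M] (n : ℕ) (f : ℕ → M) :
    ∑ P : Finpartition (univ : Finset (Fin n)), f #P.parts =
      ∑ j ∈ range (n + 1), stirling n j • f j := by
  rw [← sum_fiberwise_of_maps_to (g := fun P => #P.parts) (t := range (n + 1))]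
  · refine sum_congr rfl fun j _ => ?_
    rw [stirling_eq_card, ← sum_const]
    exact sum_congr rfl fun P hP => by rw [(mem_filter.1 hP).2]
  · intro P _
    simpa [Nat.lt_succ_iff] using P.card_parts_le_card

lemma hyperStirling_zero (n k : ℕ) : hyperStirling 0 n k = if n = k then 1 else 0 := by
  split_ifs with h <;> simp [hyperStirling, HyperPartition.outerBlocks, HyperPartition, h]

theorem hyperStirling_succ (m n k : ℕ) :
    hyperStirling (m + 1) n k = ∑ j ∈ range (n + 1), stirling n j * hyperStirling m j k := by
  rw [hyperStirling, HyperPartition.card_outerBlocks_succ]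
  simp only [HyperPartition.card_outerBlocks_eq_hyperStirling]
  simpa using sum_finpartition_eq_sum_stirling n (hyperStirling m · k)

lemma sum_range_stirling_eq_sum_fin {N n : ℕ} (hn : n < N) (f : ℕ → ℕ) :
    ∑ j ∈ range (n + 2), stirling (n + 1) j * f j =
      ∑ j : Fin N, stirling (n + 1) (j + 1) * f (j + 1) := by
  rw [sum_range_succ', stirling_succ_zero, zero_mul, add_zero,
    Fin.sum_univ_eq_sum_range (fun j => stirling (n + 1) (j + 1) * f (j + 1))]
  refine sum_subset (range_subset_range.2 hn) fun j _ hj => ?_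
  rw [mem_range, not_lt] at hj
  rw [stirling_eq_zero_of_lt (by omega), zero_mul]

theorem stmt7_general (N : ℕ) (S : Matrix (Fin N) (Fin N) ℕ)
    (hS : ∀ i j : Fin N, S i j = stirling ((i : ℕ) + 1) ((j : ℕ) + 1))
    (m : ℕ) (n k : Fin N) :
    (S ^ m) n k = hyperStirling m ((n : ℕ) + 1) ((k : ℕ) + 1) := by
  induction m generalizing n k with
  | zero => simp [Matrix.one_apply, hyperStirling_zero, Fin.val_inj]
  | succ m ih =>
    rw [pow_succ', Matrix.mul_apply, hyperStirling_succ,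
      sum_range_stirling_eq_sum_fin n.isLt (hyperStirling m · (k + 1))]
    simp only [hS, ih]

/-- the `(n,k)` entry of the `m`-th power of the `N × N` Stirling matrix
`𝐒 = (S(i,j))_{1 ≤ i,j ≤ N}` is the `m`-th order Stirling number `S^(m)(n,k)`,
for `1 ≤ k ≤ n ≤ N` (indices shifted by one since `Fin N` is zero-based). -/
theorem stmt7 (N : ℕ) (hN : 1 ≤ N) (S : Matrix (Fin N) (Fin N) ℕ)
    (hS : ∀ i j : Fin N, S i j = stirling ((i : ℕ) + 1) ((j : ℕ) + 1))
    (m : ℕ) (hm : 1 ≤ m) (n k : Fin N) (hkn : k ≤ n) :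
    (S ^ m) n k = hyperStirling m ((n : ℕ) + 1) ((k : ℕ) + 1) :=
  stmt7_general N S hS m n k
end
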